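/- Full star–triangle relation: with the crossing vertex weights given by the six free-fermionic values (1/x_i, 1/x_j, 1/x_i − 1/x_j, 0, 1/x_i, 1/x_j) and the rectilinear vertex weights (x/a for vertical molecule, x/a−1 for NW molecule, 1 otherwise), for each of the 20 admissible boundary conditions on the hexagon, the sum over internal states of products of weights on the left-hand configuration (crossing on the left of the column) equals the corresponding sum for the right-hand configuration (crossing on the right). -/
import Mathlib


/-- Exactly two of the four Booleans are `true` (the six-vertex/ice admissibility condition). -/
abbrev ExactlyTwo (a b c d : Bool) : Prop :=
  ((cond a 1 0) + (cond b 1 0) + (cond c 1 0) + (cond d 1 0) : ℕ) = 2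

/-- Boltzmann weight of a rectilinear vertex on a row with parameter `x` in a column with
parameter `a`; `W N E S` record the presence of a hydrogen atom at the west, north, east,
south positions adjacent to the vertex.  The vertical molecule gets `x/a`, the molecule with
hydrogens north and west gets `x/a - 1`, the other admissible molecules get `1`, and
inadmissible configurations get `0`. -/
noncomputable def rectWeight {K : Type*} [Field K] (x a : K) (W N E S : Bool) : K :=
  if W = true ∧ N = true ∧ E = false ∧ S = false then x / a - 1
  else if N = true ∧ S = true ∧ W = false ∧ E = false then x / a
  else if ExactlyTwo W N E S then 1 else 0

/-- Boltzmann weight of a diagonal crossing of strings `i` (lower-left to upper-right) and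
`j`, with `SW NW NE SE` recording hydrogens at the four diagonal positions. -/
noncomputable def crossWeight {K : Type*} [Field K] (xi xj : K) (SW NW NE SE : Bool) : K :=
  if SW = true ∧ NE = true ∧ NW = false ∧ SE = false then 1 / xi
  else if NW = true ∧ SE = true ∧ SW = false ∧ NE = false then 1 / xj
  else if NW = true ∧ NE = true ∧ SW = false ∧ SE = false then 1 / xi - 1 / xj
  else if SE = true ∧ NE = true ∧ SW = false ∧ NW = false then 1 / xi
  else if SW = true ∧ NW = true ∧ NE = false ∧ SE = false then 1 / xj
  else 0

set_option maxHeartbeats 4000000 in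
/-- the full star–triangle (Yang–Baxter) relation.  The hexagon has boundary
positions `α` (lower-left), `β` (upper-left), `γ` (top of the column), `δ` (right, upper
row), `ε` (right, lower row), `ζ` (bottom of the column), exactly three of which carry a
hydrogen.  On the left the crossing of strings `i, j` stands to the left of the column with
parameter `a`; summing over the placements `e1, e2, e3` of the hydrogens of the three
internal edges gives the same value as for the mirrored configuration on the right. -/
theorem stmt7 {K : Type*} [Field K] (xi xj a : K)
    (hxi : xi ≠ 0) (hxj : xj ≠ 0) (ha : a ≠ 0)
    (α β γ δ ε ζ : Bool)
    (hbc : ((cond α 1 0) + (cond β 1 0) + (cond γ 1 0) +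
            (cond δ 1 0) + (cond ε 1 0) + (cond ζ 1 0) : ℕ) = 3) :
    (∑ e1 : Bool, ∑ e2 : Bool, ∑ e3 : Bool,
      crossWeight xi xj α β e1 e2 *
        rectWeight xi a (!e1) γ δ e3 *
        rectWeight xj a (!e2) (!e3) ε ζ) =
    (∑ f1 : Bool, ∑ f2 : Bool, ∑ f3 : Bool,
      rectWeight xj a β γ f1 f3 *
        rectWeight xi a α (!f3) f2 ζ *
        crossWeight xi xj (!f2) (!f1) δ ε) := by
  simp only [Fintype.sum_bool]
  rcases α <;> rcases β <;> rcases γ <;> rcases δ <;> rcases ε <;> rcases ζ <;>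
    simp only [rectWeight, crossWeight, ExactlyTwo, Bool.not_true, Bool.not_false,
      cond_true, cond_false] at hbc ⊢ <;>
    norm_num <;> field_simp <;> ring
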